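/- arXiv:2001.07298 — 5 statements merged into one kernel-verified Lean document; each statement's English description precedes it below -/
import Mathlib

section
/- For any integer n ≥ 2 and any permutation S of {1,...,n}, letting D_i = S(i) − i, one has Σ_{k=1}^n Σ_{i=1}^k (S(i) − i) = (1/2) Σ_{i=1}^n D_i². -/
/-! The double sum counts `D_i` once for every `k ≥ i`, so it equals `∑ (n + 1 - i) D_i`.
Since `S` permutes `{1, …, n}`, `∑ S(i) = ∑ i` and `∑ S(i)² = ∑ i²`; with these,
`2(n + 1 - i)(S(i) - i) - (S(i) - i)² = 2(n + 1)(S(i) - i) + i² - S(i)²`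
sums to zero. -/

open Finset

theorem Finset.sum_Icc_sum_Icc_eq_sum_mul {R : Type*} [Ring R] (n : ℕ) (f : ℕ → R) :
    ∑ k ∈ Icc 1 n, ∑ i ∈ Icc 1 k, f i = ∑ i ∈ Icc 1 n, ((n : R) + 1 - i) * f i := by
  rw [sum_comm' (t' := Icc 1 n) (s' := fun i => Icc i n)
    (fun k i => by simp only [mem_Icc]; omega)]
  refine sum_congr rfl fun i hi => ?_
  rw [sum_const, Nat.card_Icc, nsmul_eq_mul, Nat.cast_sub (by simp at hi; omega),
    Nat.cast_add, Nat.cast_one]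

theorem Equiv.Perm.two_mul_sum_mul_sub_eq_sum_sq_sub {α R : Type*} [CommRing R]
    (σ : Equiv.Perm α) (s : Finset α) (hs : {a | σ a ≠ a} ⊆ s) (x : α → R) (c : R) :
    2 * ∑ a ∈ s, (c - x a) * (x (σ a) - x a) = ∑ a ∈ s, (x (σ a) - x a) ^ 2 := by
  have hx : ∑ a ∈ s, x (σ a) = ∑ a ∈ s, x a := σ.sum_comp s x hs
  have hx2 : ∑ a ∈ s, x (σ a) ^ 2 = ∑ a ∈ s, x a ^ 2 := σ.sum_comp s (x · ^ 2) hs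
  rw [← sub_eq_zero, mul_sum, ← sum_sub_distrib]
  calc ∑ a ∈ s, (2 * ((c - x a) * (x (σ a) - x a)) - (x (σ a) - x a) ^ 2)
      = ∑ a ∈ s, (2 * c * (x (σ a) - x a) + (x a ^ 2 - x (σ a) ^ 2)) :=
        sum_congr rfl fun a _ => by ring
    _ = 0 := by
      rw [sum_add_distrib, ← mul_sum, sum_sub_distrib, sum_sub_distrib, hx, hx2]
      ring

theorem stmt_2_general (n : ℕ) (σ : Equiv.Perm ℕ)
    (hfix : ∀ i, i ∉ Finset.Icc 1 n → σ i = i) :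
    ∑ k ∈ Finset.Icc 1 n, ∑ i ∈ Finset.Icc 1 k, ((σ i : ℝ) - (i : ℝ))
      = (1 / 2) * ∑ i ∈ Finset.Icc 1 n, ((σ i : ℝ) - (i : ℝ)) ^ 2 := by
  have hsupp : {i | σ i ≠ i} ⊆ (Icc 1 n : Set ℕ) := fun i hi =>
    not_not.mp fun h => hi (hfix i h)
  rw [sum_Icc_sum_Icc_eq_sum_mul, ← σ.two_mul_sum_mul_sub_eq_sum_sq_sub _ hsupp]
  ring

theorem stmt_2 (n : ℕ) (hn : 2 ≤ n) (σ : Equiv.Perm ℕ)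
    (hmem : ∀ i ∈ Finset.Icc 1 n, σ i ∈ Finset.Icc 1 n)
    (hfix : ∀ i, i ∉ Finset.Icc 1 n → σ i = i) :
    ∑ k ∈ Finset.Icc 1 n, ∑ i ∈ Finset.Icc 1 k, ((σ i : ℝ) - (i : ℝ))
      = (1 / 2) * ∑ i ∈ Finset.Icc 1 n, ((σ i : ℝ) - (i : ℝ)) ^ 2 :=
  stmt_2_general n σ hfix
end

section
/- For any integer n ≥ 2 and any permutation S of {1,...,n}, Σ_{i=1}^n (S(i) − i)² attains its maximum value (n³ − n)/3 exactly when S(i) = n+1−i for all i (i.e., the maximum of the sum over all permutations is (n³−n)/3, achieved at the reversal permutation). -/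
/-!
For a permutation `σ` of `{1, …, n}`, the squared displacements from the identity and from the
reversal `i ↦ n + 1 - i` add up to a quantity independent of `σ`: since `i + (n + 1 - i)` is
constant, `(σ i - i)² + (σ i - (n + 1 - i))²` equals `2 σ(i)² - 2 (n + 1) σ(i)` plus a term not
involving `σ`, and the first part sums to the same value for every permutation. Evaluating at
`σ = id` gives the total `∑ (2i - n - 1)² = (n³ - n) / 3`. Hence the displacement from the identity
is at most `(n³ - n) / 3`, with equality exactly when the displacement from the reversal vanishes.
-/

open Finset

theorem Equiv.Perm.sum_sq_sub_add_sq_sub_comp {ι : Type*} (σ : Equiv.Perm ι) (s : Finset ι)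
    (hσ : {i | σ i ≠ i} ⊆ s) (x a b : ι → ℝ) (c : ℝ) (hab : ∀ i ∈ s, a i + b i = c) :
    ∑ i ∈ s, ((x (σ i) - a i) ^ 2 + (x (σ i) - b i) ^ 2) =
      ∑ i ∈ s, ((x i - a i) ^ 2 + (x i - b i) ^ 2) := by
  have expand : ∀ y : ι → ℝ, ∑ i ∈ s, ((y i - a i) ^ 2 + (y i - b i) ^ 2) =
      ∑ i ∈ s, (2 * y i ^ 2 - 2 * c * y i) + ∑ i ∈ s, (a i ^ 2 + b i ^ 2) := fun y => by
    rw [← sum_add_distrib]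
    exact sum_congr rfl fun i hi => by rw [← hab i hi]; ring
  rw [expand (fun i => x (σ i)), expand x, σ.sum_comp s (fun j => 2 * x j ^ 2 - 2 * c * x j) hσ]

theorem sum_Icc_two_mul_sub_sq (m : ℕ) (c : ℝ) :
    ∑ i ∈ Icc 1 m, (2 * (i : ℝ) - c) ^ 2 =
      2 * m * (m + 1) * (2 * m + 1) / 3 - 2 * c * m * (m + 1) + m * c ^ 2 := by
  induction m with
  | zero => simp
  | succ k ih =>
    rw [sum_Icc_succ_top (by omega), ih]
    push_cast
    ring

theorem sum_sq_sub_add_sum_sq_sub_rev (n : ℕ) (σ : Equiv.Perm ℕ)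
    (hσ : ∀ i, i ∉ Icc 1 n → σ i = i) :
    ∑ i ∈ Icc 1 n, ((σ i : ℝ) - i) ^ 2 + ∑ i ∈ Icc 1 n, ((σ i : ℝ) - (n + 1 - i)) ^ 2 =
      ((n : ℝ) ^ 3 - n) / 3 := by
  rw [← sum_add_distrib,
    σ.sum_sq_sub_add_sq_sub_comp _ (fun i hi => not_imp_comm.mp (hσ i) hi) (fun i => (i : ℝ))
      (fun i => (i : ℝ)) (fun i => (n : ℝ) + 1 - i) (n + 1) (fun _ _ => by ring)]
  calc ∑ i ∈ Icc 1 n, (((i : ℝ) - i) ^ 2 + ((i : ℝ) - (n + 1 - i)) ^ 2)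
      = ∑ i ∈ Icc 1 n, (2 * (i : ℝ) - (n + 1)) ^ 2 := sum_congr rfl fun _ _ => by ring
    _ = ((n : ℝ) ^ 3 - n) / 3 := by rw [sum_Icc_two_mul_sub_sq]; ring

theorem stmt_3_general (n : ℕ) :
    (∀ σ : Equiv.Perm ℕ,
        (∀ i ∈ Finset.Icc 1 n, σ i ∈ Finset.Icc 1 n) →
        (∀ i, i ∉ Finset.Icc 1 n → σ i = i) →
        ∑ i ∈ Finset.Icc 1 n, ((σ i : ℝ) - (i : ℝ)) ^ 2 ≤ ((n : ℝ) ^ 3 - n) / 3) ∧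
    (∀ σ : Equiv.Perm ℕ,
        (∀ i ∈ Finset.Icc 1 n, σ i ∈ Finset.Icc 1 n) →
        (∀ i, i ∉ Finset.Icc 1 n → σ i = i) →
        (∑ i ∈ Finset.Icc 1 n, ((σ i : ℝ) - (i : ℝ)) ^ 2 = ((n : ℝ) ^ 3 - n) / 3
          ↔ ∀ i ∈ Finset.Icc 1 n, σ i = n + 1 - i)) := by
  refine ⟨fun σ _ hσ => ?_, fun σ _ hσ => ?_⟩
  · have hrev : 0 ≤ ∑ i ∈ Icc 1 n, ((σ i : ℝ) - (n + 1 - i)) ^ 2 :=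
      sum_nonneg fun _ _ => sq_nonneg _
    linarith [sum_sq_sub_add_sum_sq_sub_rev n σ hσ]
  · rw [← sum_sq_sub_add_sum_sq_sub_rev n σ hσ, left_eq_add,
      sum_eq_zero_iff_of_nonneg fun _ _ => sq_nonneg _]
    refine forall₂_congr fun i hi => ?_
    have hcast : ((n + 1 - i : ℕ) : ℝ) = n + 1 - i := by
      rw [Nat.cast_sub (by simp only [mem_Icc] at hi; omega)]
      push_cast
      ring
    rw [sq_eq_zero_iff, sub_eq_zero, ← hcast, Nat.cast_inj]

theorem stmt_3 (n : ℕ) (hn : 2 ≤ n) :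
    (∀ σ : Equiv.Perm ℕ,
        (∀ i ∈ Finset.Icc 1 n, σ i ∈ Finset.Icc 1 n) →
        (∀ i, i ∉ Finset.Icc 1 n → σ i = i) →
        ∑ i ∈ Finset.Icc 1 n, ((σ i : ℝ) - (i : ℝ)) ^ 2 ≤ ((n : ℝ) ^ 3 - n) / 3) ∧
    (∀ σ : Equiv.Perm ℕ,
        (∀ i ∈ Finset.Icc 1 n, σ i ∈ Finset.Icc 1 n) →
        (∀ i, i ∉ Finset.Icc 1 n → σ i = i) →
        (∑ i ∈ Finset.Icc 1 n, ((σ i : ℝ) - (i : ℝ)) ^ 2 = ((n : ℝ) ^ 3 - n) / 3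
          ↔ ∀ i ∈ Finset.Icc 1 n, σ i = n + 1 - i)) :=
  stmt_3_general n
end

section
/- For integers n ≥ 2 and p ≥ 1 and any permutation S of {1,...,n}, the statistic ν_{n,p}^{(l)}(S) = 1 + 2·Σ_{i=1}^n (i − S(i))(n+1−i)^p / Σ_{i=1}^n (n+1−2i)(n+1−i)^p satisfies −1 ≤ ν_{n,p}^{(l)}(S) ≤ 1. -/
open Finset

/-- The weighted rank statistic ν_{n,p}^{(l)}. -/
noncomputable def nuL (n p : ℕ) (σ : Equiv.Perm ℕ) : ℝ :=
  1 + 2 * (∑ i ∈ Finset.Icc 1 n, ((i : ℝ) - (σ i : ℝ)) * ((n : ℝ) + 1 - i) ^ p) /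
      (∑ i ∈ Finset.Icc 1 n, ((n : ℝ) + 1 - 2 * i) * ((n : ℝ) + 1 - i) ^ p)

/-!
Write `w i = (n + 1 - i) ^ p`. The numerator of `nuL` is `A - B` and the denominator is `C - A`,
where `A = ∑ i * w i`, `B = ∑ σ i * w i` and `C = ∑ (n + 1 - i) * w i`. Since `w` is decreasing,
the rearrangement inequality gives `A ≤ B ≤ C`: the identity pairs the ranks with `w` in opposite
order and the reversal `i ↦ n + 1 - i` in the same order. For `n ≥ 2` and `p ≥ 1` the weight is
not constant, so `A < C`, and then `1 + 2 (A - B) / (C - A)` lies in `[-1, 1]`.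
-/

section Rearrangement

variable {ι α : Type*} [Semiring α] [LinearOrder α] [IsStrictOrderedRing α] [ExistsAddOfLE α]
  {s : Finset ι} {σ π : Equiv.Perm ι} {f g : ι → α}

theorem MonovaryOn.sum_comp_perm_mul_le_sum_comp_perm_mul (hfg : MonovaryOn (f ∘ π) g s)
    (hσ : {x | σ x ≠ x} ⊆ s) (hπ : {x | π x ≠ x} ⊆ s) :
    ∑ i ∈ s, f (σ i) * g i ≤ ∑ i ∈ s, f (π i) * g i := by
  have hsupp : {x | (π⁻¹ * σ) x ≠ x} ⊆ s :=
    (Equiv.Perm.set_support_mul_subset π⁻¹ σ).trans <| Set.union_subset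
      (by rwa [Equiv.Perm.inv_def, Equiv.Perm.set_support_symm_eq]) hσ
  simpa using hfg.sum_comp_perm_mul_le_sum_mul hsupp

end Rearrangement

theorem one_add_two_mul_sub_div_sub_mem_Icc {a b c : ℝ} (hab : a ≤ b) (hbc : b ≤ c)
    (hac : a < c) : 1 + 2 * (a - b) / (c - a) ∈ Set.Icc (-1) 1 := by
  have hca : 0 < c - a := sub_pos.mpr hac
  rw [mul_div_assoc]
  constructor
  · have : -1 ≤ (a - b) / (c - a) := by rw [le_div_iff₀ hca]; linarith
    linarith
  · have : (a - b) / (c - a) ≤ 0 := div_nonpos_of_nonpos_of_nonneg (by linarith) hca.le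
    linarith

def revIcc (n : ℕ) : Equiv.Perm ℕ :=
  Function.Involutive.toPerm (fun i => if i ∈ Icc 1 n then n + 1 - i else i) <| by
    intro i
    simp only [mem_Icc]
    split_ifs <;> omega

theorem revIcc_apply_of_mem {n i : ℕ} (hi : i ∈ Icc 1 n) : revIcc n i = n + 1 - i :=
  if_pos hi

theorem set_support_revIcc_subset (n : ℕ) : {x | revIcc n x ≠ x} ⊆ ↑(Icc 1 n) := by
  intro x hx
  by_contra h
  exact hx (if_neg (mem_coe.not.mp h))

theorem add_one_sub_natCast_nonneg_of_mem_Icc {n i : ℕ} (hi : i ∈ Icc 1 n) :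
    0 ≤ (n : ℝ) + 1 - i := by
  have : (i : ℝ) ≤ n := by exact_mod_cast (mem_Icc.mp hi).2
  linarith

theorem cast_revIcc_of_mem {n i : ℕ} (hi : i ∈ Icc 1 n) :
    (revIcc n i : ℝ) = n + 1 - i := by
  rw [revIcc_apply_of_mem hi, Nat.cast_sub (by simp only [mem_Icc] at hi; omega)]
  push_cast
  ring

section WeightedRanks

variable (n p : ℕ)

theorem antivaryOn_cast_rankWeight :
    AntivaryOn (fun i : ℕ => (i : ℝ)) (fun i : ℕ => ((n : ℝ) + 1 - i) ^ p) ↑(Icc 1 n) := by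
  have hanti : AntivaryOn (fun i : ℕ => (i : ℝ)) (fun i : ℕ => (n : ℝ) + 1 - i) ↑(Icc 1 n) :=
    fun i _ j _ hij => by simp only at hij ⊢; linarith
  exact hanti.pow_right₀ (fun i hi => add_one_sub_natCast_nonneg_of_mem_Icc (mem_coe.mp hi)) p

theorem sum_cast_mul_rankWeight_le_sum_perm {σ : Equiv.Perm ℕ}
    (hσ : {x | σ x ≠ x} ⊆ ↑(Icc 1 n)) :
    ∑ i ∈ Icc 1 n, (i : ℝ) * ((n : ℝ) + 1 - i) ^ p
      ≤ ∑ i ∈ Icc 1 n, (σ i : ℝ) * ((n : ℝ) + 1 - i) ^ p :=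
  (antivaryOn_cast_rankWeight n p).sum_mul_le_sum_comp_perm_mul hσ

theorem sum_cast_revIcc_mul (h : ℕ → ℝ) :
    ∑ i ∈ Icc 1 n, (revIcc n i : ℝ) * h i = ∑ i ∈ Icc 1 n, ((n : ℝ) + 1 - i) * h i :=
  sum_congr rfl fun i hi => by rw [cast_revIcc_of_mem hi]

theorem monovaryOn_cast_revIcc_rankWeight :
    MonovaryOn ((fun i : ℕ => (i : ℝ)) ∘ revIcc n)
      (fun i : ℕ => ((n : ℝ) + 1 - i) ^ p) ↑(Icc 1 n) := by
  intro i hi j hj hij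
  simp only [Function.comp_apply, cast_revIcc_of_mem (mem_coe.mp hi),
    cast_revIcc_of_mem (mem_coe.mp hj)] at hij ⊢
  exact (lt_of_pow_lt_pow_left₀ p (add_one_sub_natCast_nonneg_of_mem_Icc (mem_coe.mp hj)) hij).le

theorem sum_perm_mul_rankWeight_le_sum_rev {σ : Equiv.Perm ℕ}
    (hσ : {x | σ x ≠ x} ⊆ ↑(Icc 1 n)) :
    ∑ i ∈ Icc 1 n, (σ i : ℝ) * ((n : ℝ) + 1 - i) ^ p
      ≤ ∑ i ∈ Icc 1 n, ((n : ℝ) + 1 - i) * ((n : ℝ) + 1 - i) ^ p := by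
  rw [← sum_cast_revIcc_mul]
  exact (monovaryOn_cast_revIcc_rankWeight n p).sum_comp_perm_mul_le_sum_comp_perm_mul hσ
    (set_support_revIcc_subset n)

theorem sum_cast_mul_rankWeight_lt_sum_rev (hn : 2 ≤ n) (hp : 1 ≤ p) :
    ∑ i ∈ Icc 1 n, (i : ℝ) * ((n : ℝ) + 1 - i) ^ p
      < ∑ i ∈ Icc 1 n, ((n : ℝ) + 1 - i) * ((n : ℝ) + 1 - i) ^ p := by
  rw [← sum_cast_revIcc_mul, (antivaryOn_cast_rankWeight n p).sum_mul_lt_sum_comp_perm_mul_iff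
    (set_support_revIcc_subset n)]
  -- equality would make the reversal antivary with the weight, which fails at `n` and `1`
  intro hanti
  have h1 : 1 ∈ Icc 1 n := by simp only [mem_Icc]; omega
  have hn' : n ∈ Icc 1 n := by simp only [mem_Icc]; omega
  have hn2 : (2 : ℝ) ≤ n := by exact_mod_cast hn
  have hw : ((n : ℝ) + 1 - (n : ℕ)) ^ p < ((n : ℝ) + 1 - (1 : ℕ)) ^ p := by
    simp only [Nat.cast_one, add_sub_cancel_right, add_sub_cancel_left, one_pow]
    exact one_lt_pow₀ (by linarith) (by omega)
  have := hanti (mem_coe.mpr hn') (mem_coe.mpr h1) hw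
  simp only [Function.comp_apply, cast_revIcc_of_mem h1, cast_revIcc_of_mem hn'] at this
  push_cast at this
  linarith

theorem nuL_eq_sub_div_sub (σ : Equiv.Perm ℕ) :
    nuL n p σ = 1 + 2 * (∑ i ∈ Icc 1 n, (i : ℝ) * ((n : ℝ) + 1 - i) ^ p
        - ∑ i ∈ Icc 1 n, (σ i : ℝ) * ((n : ℝ) + 1 - i) ^ p)
      / (∑ i ∈ Icc 1 n, ((n : ℝ) + 1 - i) * ((n : ℝ) + 1 - i) ^ p
        - ∑ i ∈ Icc 1 n, (i : ℝ) * ((n : ℝ) + 1 - i) ^ p) := by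
  rw [nuL, ← sum_sub_distrib, ← sum_sub_distrib]
  congr 3
  · exact sum_congr rfl fun i _ => by ring
  · funext i
    ring

end WeightedRanks

theorem stmt_5_general (n p : ℕ) (hn : 2 ≤ n) (hp : 1 ≤ p) (σ : Equiv.Perm ℕ)
    (hfix : ∀ i, i ∉ Finset.Icc 1 n → σ i = i) :
    -1 ≤ nuL n p σ ∧ nuL n p σ ≤ 1 := by
  have hσ : {x | σ x ≠ x} ⊆ ↑(Icc 1 n) := fun x hx => by_contra fun h => hx (hfix x h)
  rw [nuL_eq_sub_div_sub]
  exact one_add_two_mul_sub_div_sub_mem_Icc (sum_cast_mul_rankWeight_le_sum_perm n p hσ)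
    (sum_perm_mul_rankWeight_le_sum_rev n p hσ) (sum_cast_mul_rankWeight_lt_sum_rev n p hn hp)

theorem stmt_5 (n p : ℕ) (hn : 2 ≤ n) (hp : 1 ≤ p) (σ : Equiv.Perm ℕ)
    (hmem : ∀ i ∈ Finset.Icc 1 n, σ i ∈ Finset.Icc 1 n)
    (hfix : ∀ i, i ∉ Finset.Icc 1 n → σ i = i) :
    -1 ≤ nuL n p σ ∧ nuL n p σ ≤ 1 :=
  stmt_5_general n p hn hp σ hfix
end

section
/- For integer n ≥ 2 and p = 1, the statistic ν_{n,1}^{(l)}(S) = 1 + 2·Σ_{i=1}^n (i − S(i))(n+1−i) / Σ_{i=1}^n (n+1−2i)(n+1−i) equals the Spearman rank correlation ρ_{n,s}(S) = (12/(n³−n))·Σ_{i=1}^n i·S(i) − 3(n+1)/(n−1). -/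
open Finset

/-- Spearman's rank correlation. -/
noncomputable def spearman (n : ℕ) (σ : Equiv.Perm ℕ) : ℝ :=
  (12 / ((n : ℝ) ^ 3 - n)) * (∑ i ∈ Finset.Icc 1 n, (i : ℝ) * (σ i : ℝ))
    - 3 * ((n : ℝ) + 1) / ((n : ℝ) - 1)

/-! For `p = 1` both numerator and denominator of `nuL` are polynomial in `i`, apart from the
cross term `∑ i σ(i)` and the sum `∑ σ(i)`. An injective self-map of `{1, …, n}` permutes it,
so `∑ σ(i) = ∑ i`, and Faulhaber's formulas for `∑ i` and `∑ i²` reduce `nuL n 1 σ` to an affine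
function of `∑ i σ(i)`, which is Spearman's formula. -/

theorem sum_comp_eq_of_mapsTo_of_injOn {α M : Type*} [AddCommMonoid M] {s : Finset α}
    {f : α → α} (hmaps : Set.MapsTo f s s) (hinj : Set.InjOn f s) (g : α → M) :
    ∑ i ∈ s, g (f i) = ∑ i ∈ s, g i :=
  sum_nbij f hmaps hinj (surjOn_of_injOn_of_card_le f hmaps hinj le_rfl) fun _ _ ↦ rfl

theorem sum_Icc_one_natCast (n : ℕ) :
    ∑ i ∈ Icc 1 n, (i : ℝ) = n * (n + 1) / 2 := by
  induction n with
  | zero => simp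
  | succ m ih =>
    rw [sum_Icc_succ_top (by omega), ih]
    push_cast
    ring

theorem sum_Icc_one_natCast_sq (n : ℕ) :
    ∑ i ∈ Icc 1 n, (i : ℝ) ^ 2 = n * (n + 1) * (2 * n + 1) / 6 := by
  induction n with
  | zero => simp
  | succ m ih =>
    rw [sum_Icc_succ_top (by omega), ih]
    push_cast
    ring

theorem sum_Icc_sub_mul_linear_weight (n : ℕ) (f : ℕ → ℕ)
    (hf : ∑ i ∈ Icc 1 n, (f i : ℝ) = ∑ i ∈ Icc 1 n, (i : ℝ)) :
    ∑ i ∈ Icc 1 n, ((i : ℝ) - f i) * ((n : ℝ) + 1 - i) ^ 1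
      = ∑ i ∈ Icc 1 n, (i : ℝ) * f i - n * (n + 1) * (2 * n + 1) / 6 := by
  have hexpand : ∀ i ∈ Icc 1 n, ((i : ℝ) - f i) * ((n : ℝ) + 1 - i) ^ 1
      = ((n + 1) * i - (i : ℝ) ^ 2 - (n + 1) * (f i : ℝ)) + i * f i := by
    intro i _
    ring
  rw [sum_congr rfl hexpand, sum_add_distrib, sum_sub_distrib, sum_sub_distrib, ← mul_sum,
    ← mul_sum, hf, sum_Icc_one_natCast, sum_Icc_one_natCast_sq]
  ring

theorem sum_Icc_centered_mul_linear_weight (n : ℕ) :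
    ∑ i ∈ Icc 1 n, ((n : ℝ) + 1 - 2 * i) * ((n : ℝ) + 1 - i) ^ 1 = ((n : ℝ) ^ 3 - n) / 6 := by
  have hexpand : ∀ i ∈ Icc 1 n, ((n : ℝ) + 1 - 2 * i) * ((n : ℝ) + 1 - i) ^ 1
      = (((n : ℝ) + 1) ^ 2 - 3 * (n + 1) * i) + 2 * (i : ℝ) ^ 2 := by
    intro i _
    ring
  rw [sum_congr rfl hexpand, sum_add_distrib, sum_sub_distrib, ← mul_sum, ← mul_sum, sum_const,
    nsmul_eq_mul, Nat.card_Icc, sum_Icc_one_natCast, sum_Icc_one_natCast_sq]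
  push_cast
  ring

theorem stmt_6_general (n : ℕ) (hn : 2 ≤ n) (σ : Equiv.Perm ℕ)
    (hmem : ∀ i ∈ Finset.Icc 1 n, σ i ∈ Finset.Icc 1 n) :
    nuL n 1 σ = spearman n σ := by
  have hsum : ∑ i ∈ Icc 1 n, (σ i : ℝ) = ∑ i ∈ Icc 1 n, (i : ℝ) :=
    sum_comp_eq_of_mapsTo_of_injOn hmem σ.injective.injOn (fun i ↦ (i : ℝ))
  have hn' : (2 : ℝ) ≤ n := by exact_mod_cast hn
  have hpred : (n : ℝ) - 1 ≠ 0 := by linarith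
  unfold nuL spearman
  rw [sum_Icc_sub_mul_linear_weight n σ hsum, sum_Icc_centered_mul_linear_weight,
    show (n : ℝ) ^ 3 - n = n * (n - 1) * (n + 1) by ring]
  field_simp
  ring

theorem stmt_6 (n : ℕ) (hn : 2 ≤ n) (σ : Equiv.Perm ℕ)
    (hmem : ∀ i ∈ Finset.Icc 1 n, σ i ∈ Finset.Icc 1 n)
    (hfix : ∀ i, i ∉ Finset.Icc 1 n → σ i = i) :
    nuL n 1 σ = spearman n σ :=
  stmt_6_general n hn σ hmem
end

section
/- For every copula C (a 2-increasing function on [0,1]² with C(u,0)=C(0,v)=0, C(u,1)=u, C(1,v)=v) and every positive integer p, the representation ν_p^{(l)} = 2(p+1)(p+2)∫∫(1−u)^{p−1}(C(u,v)−uv)dudv coincides with (2(p+1)(p+2)/p)·∫∫(1−u)^p(1−v)dC(u,v) − (p+2)/p, where the latter integral is with respect to the probability measure induced by C on [0,1]². -/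
/-!
Write `(1 - x)^p = ∫_x^1 p (1 - t)^(p-1) dt` and `1 - y = ∫_y^1 dt`. Exchanging the order of
integration (Fubini for `μ × λ²`, the integrand being `1[x ≤ w] φ(w₁) ψ(w₂)`) turns
`∫ (1 - x)^p (1 - y) dC` into `p ∫∫ (1 - u)^(p-1) C(u, v) du dv`, a Hoeffding-type identity.
What is left of the left-hand side is the Beta integral `∫∫ (1 - u)^(p-1) u v = 1 / (2p(p+1))`.
-/

open MeasureTheory

/-- A bivariate copula: a 2-increasing function on [0,1]² with uniform margins. -/
structure Copula where
  C : ℝ → ℝ → ℝ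
  groundedU : ∀ u ∈ Set.Icc (0:ℝ) 1, C u 0 = 0
  groundedV : ∀ v ∈ Set.Icc (0:ℝ) 1, C 0 v = 0
  marginU : ∀ u ∈ Set.Icc (0:ℝ) 1, C u 1 = u
  marginV : ∀ v ∈ Set.Icc (0:ℝ) 1, C 1 v = v
  twoIncreasing : ∀ u₁ u₂ v₁ v₂ : ℝ, 0 ≤ u₁ → u₁ ≤ u₂ → u₂ ≤ 1 →
    0 ≤ v₁ → v₁ ≤ v₂ → v₂ ≤ 1 →
    0 ≤ C u₂ v₂ - C u₁ v₂ - C u₂ v₁ + C u₁ v₁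

open Set

/-- `Iic (u, v)` is the quadrant `(-∞, u] × (-∞, v]` for the product order. -/
noncomputable def bivariateCdf (μ : Measure (ℝ × ℝ)) (u v : ℝ) : ℝ := μ.real (Iic (u, v))

lemma bivariateCdf_eq_measureReal_Icc_prod_Icc {μ : Measure (ℝ × ℝ)}
    (hμ : ∀ᵐ x ∂μ, x ∈ Icc (0:ℝ) 1 ×ˢ Icc (0:ℝ) 1)
    (u v : ℝ) : bivariateCdf μ u v = μ.real (Icc 0 u ×ˢ Icc 0 v) :=
  measureReal_congr <| hμ.mono fun x ⟨⟨hx₁, _⟩, hx₂, _⟩ => by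
    change (x ≤ (u, v)) = (x ∈ Icc 0 u ×ˢ Icc 0 v)
    simp only [Prod.le_def, mem_prod, mem_Icc, hx₁, hx₂, true_and]

section

variable {μ : Measure (ℝ × ℝ)} [IsFiniteMeasure μ]

lemma bivariateCdf_mono_left (v : ℝ) : Monotone fun u => bivariateCdf μ u v :=
  fun _ _ h => measureReal_mono (Iic_subset_Iic.mpr (Prod.mk_le_mk.mpr ⟨h, le_rfl⟩))

lemma bivariateCdf_mono_right (u : ℝ) : Monotone (bivariateCdf μ u) :=
  fun _ _ h => measureReal_mono (Iic_subset_Iic.mpr (Prod.mk_le_mk.mpr ⟨le_rfl, h⟩))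

lemma monotone_integral_bivariateCdf : Monotone fun u => ∫ v in (0:ℝ)..1, bivariateCdf μ u v :=
  fun _ _ h => intervalIntegral.integral_mono_on zero_le_one
    (bivariateCdf_mono_right _).intervalIntegrable (bivariateCdf_mono_right _).intervalIntegrable
    fun v _ => bivariateCdf_mono_left v h

lemma integral_Icc_indicator_Ici {a : ℝ} (ha : a ∈ Icc (0:ℝ) 1) (φ : ℝ → ℝ) :
    ∫ t in Icc (0:ℝ) 1, (Ici a).indicator φ t = ∫ t in a..1, φ t := by
  have h : Icc 0 1 ∩ Ici a = Icc a 1 := by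
    ext t; simp only [mem_inter_iff, mem_Icc, mem_Ici]
    exact ⟨fun h => ⟨h.2, h.1.2⟩, fun h => ⟨⟨ha.1.trans h.1, h.2⟩, h.1⟩⟩
  rw [setIntegral_indicator measurableSet_Ici, h, intervalIntegral.integral_of_le ha.2,
    integral_Icc_eq_integral_Ioc]

theorem integral_mul_integral_eq_integral_bivariateCdf
    (hμ : ∀ᵐ x ∂μ, x ∈ Icc (0:ℝ) 1 ×ˢ Icc (0:ℝ) 1) {φ ψ : ℝ → ℝ}
    (hφ : Continuous φ) (hψ : Continuous ψ) :
    ∫ x, (∫ u in x.1..1, φ u) * (∫ v in x.2..1, ψ v) ∂μ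
      = ∫ u in (0:ℝ)..1, ∫ v in (0:ℝ)..1, φ u * ψ v * bivariateCdf μ u v := by
  set ν := volume.restrict (Icc (0:ℝ) 1)
  let F : ℝ × ℝ → ℝ × ℝ → ℝ := fun x => (Ici x).indicator fun w => φ w.1 * ψ w.2
  have hF : Integrable (Function.uncurry F) (μ.prod (ν.prod ν)) := by
    have hφψ : Integrable (fun w : ℝ × ℝ => φ w.1 * ψ w.2) (ν.prod ν) :=
      hφ.integrableOn_Icc.mul_prod hψ.integrableOn_Icc
    exact (hφψ.comp_snd μ).indicator (measurableSet_le measurable_fst measurable_snd)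
  have hpoint : ∀ x ∈ Icc (0:ℝ) 1 ×ˢ Icc (0:ℝ) 1,
      (∫ u in x.1..1, φ u) * (∫ v in x.2..1, ψ v) = ∫ w, F x w ∂(ν.prod ν) := by
    intro x hx
    rw [← integral_Icc_indicator_Ici hx.1, ← integral_Icc_indicator_Ici hx.2,
      ← integral_prod_mul]
    congr 1 with w
    by_cases h₁ : x.1 ≤ w.1 <;> by_cases h₂ : x.2 ≤ w.2 <;>
      simp [F, Prod.le_def, h₁, h₂]
  have hinner : ∀ w, ∫ x, F x w ∂μ = φ w.1 * ψ w.2 * bivariateCdf μ w.1 w.2 := by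
    intro w
    rw [mul_comm, bivariateCdf, ← smul_eq_mul, ← integral_indicator_const _ measurableSet_Iic]
    simp only [F, indicator_apply, mem_Ici, mem_Iic]
  calc ∫ x, (∫ u in x.1..1, φ u) * (∫ v in x.2..1, ψ v) ∂μ
      = ∫ x, ∫ w, F x w ∂(ν.prod ν) ∂μ := integral_congr_ae (hμ.mono hpoint)
    _ = ∫ w, ∫ x, F x w ∂μ ∂(ν.prod ν) := integral_integral_swap hF
    _ = ∫ w, φ w.1 * ψ w.2 * bivariateCdf μ w.1 w.2 ∂(ν.prod ν) := by simp_rw [hinner]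
    _ = ∫ u in (0:ℝ)..1, ∫ v in (0:ℝ)..1, φ u * ψ v * bivariateCdf μ u v := by
      rw [integral_prod _ (hF.integral_prod_right.congr (.of_forall hinner))]
      simp only [ν, integral_Icc_eq_integral_Ioc, intervalIntegral.integral_of_le zero_le_one]

lemma integral_integral_mul_bivariateCdf_sub_mul {w : ℝ → ℝ} (hw : Continuous w) :
    ∫ u in (0:ℝ)..1, ∫ v in (0:ℝ)..1, w u * (bivariateCdf μ u v - u * v)
      = (∫ u in (0:ℝ)..1, w u * ∫ v in (0:ℝ)..1, bivariateCdf μ u v)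
        - (∫ u in (0:ℝ)..1, w u * u) / 2 := by
  have hinner : ∀ u, ∫ v in (0:ℝ)..1, w u * (bivariateCdf μ u v - u * v)
      = w u * (∫ v in (0:ℝ)..1, bivariateCdf μ u v) - w u * u / 2 := by
    intro u
    rw [intervalIntegral.integral_const_mul, intervalIntegral.integral_sub
      (bivariateCdf_mono_right u).intervalIntegrable
      ((continuous_const_mul u).intervalIntegrable _ _),
      intervalIntegral.integral_const_mul, integral_id]
    ring
  simp_rw [hinner]
  rw [intervalIntegral.integral_sub
    (monotone_integral_bivariateCdf.intervalIntegrable.continuousOn_mul hw.continuousOn)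
    ((by fun_prop : Continuous fun u => w u * u / 2).intervalIntegrable _ _),
    intervalIntegral.integral_div]

end

lemma integral_one_sub_pow_mul_self (n : ℕ) :
    ∫ u in (0:ℝ)..1, (1 - u) ^ n * u = 1 / ((n + 1) * (n + 2)) := by
  have h := intervalIntegral.integral_comp_sub_left (a := (0:ℝ)) (b := 1)
    (fun t => t ^ n * (1 - t)) 1
  simp only [sub_sub_cancel, sub_zero, sub_self] at h
  rw [h]
  simp only [mul_sub, mul_one, ← pow_succ]
  rw [intervalIntegral.integral_sub ((continuous_pow _).intervalIntegrable _ _)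
    ((continuous_pow _).intervalIntegrable _ _), integral_pow, integral_pow]
  push_cast
  field_simp
  ring

lemma integral_succ_mul_one_sub_pow (n : ℕ) (a : ℝ) :
    ∫ u in a..1, ((n : ℝ) + 1) * (1 - u) ^ n = (1 - a) ^ (n + 1) := by
  rw [intervalIntegral.integral_const_mul, intervalIntegral.integral_comp_sub_left (fun t => t ^ n),
    integral_pow, sub_self, zero_pow n.succ_ne_zero, sub_zero]
  field_simp

theorem stmt_11 (c : Copula) (p : ℕ) (hp : 1 ≤ p)
    (μ : Measure (ℝ × ℝ)) [IsProbabilityMeasure μ]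
    (hμ : ∀ u ∈ Set.Icc (0:ℝ) 1, ∀ v ∈ Set.Icc (0:ℝ) 1,
      (μ (Set.Icc 0 u ×ˢ Set.Icc 0 v)).toReal = c.C u v)
    (hsupp : μ (Set.Icc (0:ℝ) 1 ×ˢ Set.Icc (0:ℝ) 1) = 1) :
    2 * ((p : ℝ) + 1) * ((p : ℝ) + 2) *
        (∫ u in (0:ℝ)..1, ∫ v in (0:ℝ)..1, (1 - u) ^ (p - 1) * (c.C u v - u * v))
      = (2 * ((p : ℝ) + 1) * ((p : ℝ) + 2) / p) *
          (∫ x, (1 - x.1) ^ p * (1 - x.2) ∂μ) - ((p : ℝ) + 2) / p := by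
  obtain ⟨n, rfl⟩ : ∃ n, p = n + 1 := ⟨p - 1, by omega⟩
  have hconc : ∀ᵐ x ∂μ, x ∈ Icc (0:ℝ) 1 ×ˢ Icc (0:ℝ) 1 :=
    (mem_ae_iff_prob_eq_one (measurableSet_Icc.prod measurableSet_Icc)).mpr hsupp
  have hC : ∀ u ∈ uIcc (0:ℝ) 1, ∀ v ∈ uIcc (0:ℝ) 1, c.C u v = bivariateCdf μ u v := by
    intro u hu v hv
    rw [uIcc_of_le zero_le_one] at hu hv
    rw [← hμ u hu v hv, bivariateCdf_eq_measureReal_Icc_prod_Icc hconc, measureReal_def]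
  have hcdf : ∫ u in (0:ℝ)..1, ∫ v in (0:ℝ)..1, (1 - u) ^ n * (c.C u v - u * v)
      = ∫ u in (0:ℝ)..1, ∫ v in (0:ℝ)..1, (1 - u) ^ n * (bivariateCdf μ u v - u * v) :=
    intervalIntegral.integral_congr fun u hu => intervalIntegral.integral_congr fun v hv => by
      simp only [hC u hu v hv]
  have hhoeffding : ∫ x, (1 - x.1) ^ (n + 1) * (1 - x.2) ∂μ
      = (n + 1) * ∫ u in (0:ℝ)..1, (1 - u) ^ n * ∫ v in (0:ℝ)..1, bivariateCdf μ u v := by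
    have h := integral_mul_integral_eq_integral_bivariateCdf hconc
      (φ := fun u => ((n : ℝ) + 1) * (1 - u) ^ n) (ψ := fun _ => 1) (by fun_prop) (by fun_prop)
    simp only [integral_succ_mul_one_sub_pow, integral_one, mul_one] at h
    rw [h, ← intervalIntegral.integral_const_mul]
    simp only [mul_assoc, intervalIntegral.integral_const_mul]
  rw [Nat.add_sub_cancel, hcdf, integral_integral_mul_bivariateCdf_sub_mul (by fun_prop),
    hhoeffding, integral_one_sub_pow_mul_self]
  push_cast
  field_simp
  ring
end
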